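/- Let r ≥ 2, let t, n be positive integers, let G be a graph on rn + (r+1)t vertices, and let c be a red-blue colouring of E(G) containing no red path with n edges. Then for each 1 ≤ s ≤ r there exist pairwise disjoint sets A_1, ..., A_{s+1} ⊆ V(G) with |A_1| = ... = |A_s| = t and |A_{s+1}| = (r - s)n + (r - s + 1)t, such that for all 1 ≤ i < j ≤ s+1, every edge of G between A_i and A_j is coloured blue. -/

import Mathlib

/-
Let `H` be the red subgraph. Run depth-first search in `H`: its stack is always a path of `H`,
so it holds at most `n` vertices. Stopping as soon as `t` vertices are finished leaves a set `S`
of size `t` with no red edge to the unvisited vertices, of which there are at least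
`|W| - t - n`. Repeating this `s` times inside the unvisited part, starting from all of `V`,
peels off `s` sets of size `t` and leaves at least `|V| - s(n + t) = (r - s)n + (r - s + 1)t`
vertices.
-/

open SimpleGraph Finset

/-- The colouring `c` (with `true` = red) contains a red path with `n` edges in `G`. -/
def RedPathLen {V : Type*} (G : SimpleGraph V) (c : Sym2 V → Bool) (n : ℕ) : Prop :=
  ∃ (u v : V) (p : G.Walk u v), p.IsPath ∧ p.length = n ∧ ∀ e ∈ p.edges, c e = true

namespace SimpleGraph

variable {V : Type*}

def PathFree (H : SimpleGraph V) (n : ℕ) : Prop :=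
  ∀ ⦃u v : V⦄ (p : H.Walk u v), p.IsPath → p.length ≠ n

def IsSeparated (H : SimpleGraph V) (A B : Finset V) : Prop :=
  Disjoint A B ∧ ∀ u ∈ A, ∀ v ∈ B, ¬ H.Adj u v

variable {H : SimpleGraph V} {n t : ℕ}

theorem PathFree.length_le (hH : H.PathFree n) {l : List V} (hnd : l.Nodup)
    (hl : l.IsChain H.Adj) : l.length ≤ n := by
  by_contra! hlong
  have hne : l.take (n + 1) ≠ [] := by
    rw [Ne, ← List.length_eq_zero_iff, List.length_take]; omega
  let p := Walk.ofSupport _ hne (hl.take (n + 1))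
  refine hH p ?_ ?_
  · rw [Walk.isPath_def, Walk.support_ofSupport]
    exact hnd.sublist (List.take_sublist _ _)
  · simp [p]; omega

theorem IsSeparated.symm {A B : Finset V} (h : H.IsSeparated A B) : H.IsSeparated B A :=
  ⟨h.1.symm, fun u hu v hv huv => h.2 v hv u hu huv.symm⟩

theorem IsSeparated.mono {A A' B B' : Finset V} (h : H.IsSeparated A B) (hA : A' ⊆ A)
    (hB : B' ⊆ B) : H.IsSeparated A' B' :=
  ⟨h.1.mono hA hB, fun u hu v hv => h.2 u (hA hu) v (hB hv)⟩

/-- Depth-first search with finished vertices `S`, stack `st` (top first) and unvisited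
vertices `W`. -/
structure IsDFSState (H : SimpleGraph V) (S : Finset V) (st : List V) (W : Finset V) : Prop where
  separated : H.IsSeparated S W
  notMem_of_mem_stack : ∀ x ∈ st, x ∉ S ∧ x ∉ W
  nodup : st.Nodup
  isChain : st.IsChain H.Adj

theorem isDFSState_empty (W : Finset V) : H.IsDFSState ∅ [] W :=
  ⟨⟨disjoint_empty_left W, by simp⟩, by simp, List.nodup_nil, List.isChain_nil⟩

variable [DecidableEq V]

theorem IsDFSState.push {S W : Finset V} {st : List V} {w : V} (h : H.IsDFSState S st W)
    (hw : w ∈ W) (hadj : ∀ v ∈ st.head?, H.Adj w v) : H.IsDFSState S (w :: st) (W.erase w) where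
  separated := h.separated.mono subset_rfl (erase_subset w W)
  notMem_of_mem_stack x hx := by
    rcases List.mem_cons.mp hx with rfl | hx
    · exact ⟨disjoint_right.mp h.separated.1 hw, notMem_erase x W⟩
    · exact ⟨(h.notMem_of_mem_stack x hx).1, fun hxW =>
        (h.notMem_of_mem_stack x hx).2 (mem_of_mem_erase hxW)⟩
  nodup := List.nodup_cons.mpr ⟨fun hws => (h.notMem_of_mem_stack w hws).2 hw, h.nodup⟩
  isChain := List.isChain_cons.mpr ⟨hadj, h.isChain⟩

theorem IsDFSState.pop {S W : Finset V} {st : List V} {v : V} (h : H.IsDFSState S (v :: st) W)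
    (hv : ∀ w ∈ W, ¬ H.Adj w v) : H.IsDFSState (insert v S) st W where
  separated := by
    refine ⟨disjoint_insert_left.mpr ⟨(h.notMem_of_mem_stack v (by simp)).2, h.separated.1⟩, ?_⟩
    intro u hu w hw
    rcases mem_insert.mp hu with rfl | hu
    · exact fun huw => hv w hw huw.symm
    · exact h.separated.2 u hu w hw
  notMem_of_mem_stack x hx := by
    refine ⟨fun hxS => ?_, (h.notMem_of_mem_stack x (by simp [hx])).2⟩
    rcases mem_insert.mp hxS with rfl | hxS
    · exact (List.nodup_cons.mp h.nodup).1 hx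
    · exact (h.notMem_of_mem_stack x (by simp [hx])).1 hxS
  nodup := (List.nodup_cons.mp h.nodup).2
  isChain := h.isChain.tail

theorem IsDFSState.exists_separated (hH : H.PathFree n) {S W : Finset V} {st : List V}
    (h : H.IsDFSState S st W) (hSt : #S ≤ t) (htW : t ≤ #S + st.length + #W) :
    ∃ S' ⊆ S ∪ st.toFinset ∪ W, ∃ W' ⊆ W,
      #S' = t ∧ #S + st.length + #W ≤ t + n + #W' ∧ H.IsSeparated S' W' := by
  induction hk : 2 * #W + st.length using Nat.strong_induction_on generalizing S st W with
  | _ k ih =>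
  rcases hSt.eq_or_lt with hS | hS
  · have hst := hH.length_le h.nodup h.isChain
    exact ⟨S, subset_union_left.trans subset_union_left, W, subset_rfl, hS, by omega,
      h.separated⟩
  -- With an empty stack this lets any unvisited vertex start a new search.
  by_cases hpush : ∃ w ∈ W, ∀ v ∈ st.head?, H.Adj w v
  · obtain ⟨w, hw, hadj⟩ := hpush
    have hcard := card_erase_of_mem hw
    have hWpos := card_pos.mpr ⟨w, hw⟩
    obtain ⟨S', hS', W', hW', hcardS', hbound, hsep⟩ :=
      ih (2 * #(W.erase w) + st.length + 1) (by omega) (h.push hw hadj) hSt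
        (by simp only [List.length_cons]; omega) rfl
    refine ⟨S', hS'.trans ?_, W', hW'.trans (erase_subset w W), hcardS',
      by simp only [List.length_cons] at hbound; omega, hsep⟩
    intro x
    simp only [mem_union, List.toFinset_cons, mem_insert, List.mem_toFinset, mem_erase]
    rintro ((hx | rfl | hx) | ⟨-, hx⟩) <;> tauto
  · push Not at hpush
    obtain ⟨v, l, rfl⟩ : ∃ v l, st = v :: l := by
      cases st with
      | nil =>
        obtain ⟨w, hw⟩ : W.Nonempty := card_pos.mp (by simp only [List.length_nil] at htW; omega)
        simpa using hpush w hw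
      | cons v l => exact ⟨v, l, rfl⟩
    have hvS := (h.notMem_of_mem_stack v List.mem_cons_self).1
    have hcard := card_insert_of_notMem hvS
    obtain ⟨S', hS', W', hW', hcardS', hbound, hsep⟩ :=
      ih (2 * #W + l.length) (by simp only [← hk, List.length_cons]; omega)
        (h.pop fun w hw => by simpa using hpush w hw) (by omega)
        (by simp only [List.length_cons] at htW; omega) rfl
    refine ⟨S', hS'.trans ?_, W', hW', hcardS',
      by simp only [List.length_cons] at hbound ⊢; omega, hsep⟩
    intro x
    simp only [mem_union, List.toFinset_cons, mem_insert, List.mem_toFinset]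
    tauto

theorem PathFree.exists_separated (hH : H.PathFree n) {W : Finset V} (ht : t ≤ #W) :
    ∃ S ⊆ W, ∃ W' ⊆ W, #S = t ∧ #W ≤ t + n + #W' ∧ H.IsSeparated S W' := by
  simpa using (isDFSState_empty W).exists_separated hH (Nat.zero_le t) (by simpa using ht)

theorem PathFree.exists_separated_family (hH : H.PathFree n) (s m : ℕ) {W : Finset V}
    (hW : s * (n + t) + m ≤ #W) :
    ∃ A : Fin (s + 1) → Finset V, (∀ i, A i ⊆ W) ∧
      Pairwise (fun i j => H.IsSeparated (A i) (A j)) ∧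
      (∀ i : Fin (s + 1), (i : ℕ) < s → #(A i) = t) ∧ #(A (Fin.last s)) = m := by
  induction s generalizing W with
  | zero =>
    obtain ⟨B, hBW, hB⟩ := exists_subset_card_eq (show m ≤ #W by omega)
    exact ⟨fun _ => B, fun _ => hBW, Subsingleton.pairwise (α := Fin 1), by simp, hB⟩
  | succ s ih =>
    obtain ⟨S, hSW, W₁, hW₁, hS, hW₁card, hsep⟩ :=
      hH.exists_separated (show t ≤ #W by rw [Nat.succ_mul] at hW; omega)
    obtain ⟨A, hAW₁, hApair, hAcard, hAlast⟩ :=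
      ih (W := W₁) (by rw [Nat.succ_mul] at hW; omega)
    have hSA (i) : H.IsSeparated S (A i) := hsep.mono subset_rfl (hAW₁ i)
    refine ⟨Fin.cons S A, ?_, ?_, ?_, by simpa using hAlast⟩
    · exact Fin.cases hSW fun i => (hAW₁ i).trans hW₁
    · exact pairwise_fin_succ_iff.mpr ⟨fun i => (hSA i).symm, hSA, hApair⟩
    · exact Fin.cases (fun _ => hS) fun i hi => hAcard i (by simpa using hi)

end SimpleGraph

def redGraph {V : Type*} (G : SimpleGraph V) (c : Sym2 V → Bool) : SimpleGraph V :=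
  G.deleteEdges {e | c e = false}

theorem redPathLen_of_isPath {V : Type*} {G : SimpleGraph V} {c : Sym2 V → Bool} {u v : V}
    (p : (redGraph G c).Walk u v) (hp : p.IsPath) : RedPathLen G c p.length := by
  have hle : redGraph G c ≤ G := deleteEdges_le _
  refine ⟨u, v, p.mapLe hle, (Walk.isPath_mapLe _).mpr hp, Walk.length_mapLe _ _,
    fun e he => ?_⟩
  rw [Walk.edges_mapLe_eq_edges] at he
  have hred := p.edges_subset_edgeSet he
  rw [redGraph, edgeSet_deleteEdges] at hred
  simpa using hred.2

theorem pathFree_redGraph {V : Type*} {G : SimpleGraph V} {c : Sym2 V → Bool} {n : ℕ}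
    (hc : ¬ RedPathLen G c n) : (redGraph G c).PathFree n :=
  fun _ _ p hp hn => hc (hn ▸ redPathLen_of_isPath p hp)

theorem stmt_2_general {V : Type*} [Fintype V] (G : SimpleGraph V) (r n t : ℕ)
    (hV : Fintype.card V = r * n + (r + 1) * t)
    (c : Sym2 V → Bool) (hc : ¬ RedPathLen G c n) :
    ∀ s : ℕ, 1 ≤ s → s ≤ r →
      ∃ A : Fin (s + 1) → Finset V,
        (∀ i j, i ≠ j → Disjoint (A i) (A j)) ∧
        (∀ i : Fin (s + 1), (i : ℕ) < s → (A i).card = t) ∧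
        (A (Fin.last s)).card = (r - s) * n + (r - s + 1) * t ∧
        (∀ i j, i ≠ j → ∀ u ∈ A i, ∀ v ∈ A j, G.Adj u v → c s(u, v) = false) := by
  classical
  intro s _ hsr
  have hcard : s * (n + t) + ((r - s) * n + (r - s + 1) * t) ≤ #(univ : Finset V) := by
    obtain ⟨d, rfl⟩ := Nat.exists_eq_add_of_le hsr
    rw [card_univ, hV, Nat.add_sub_cancel_left]
    nlinarith
  obtain ⟨A, -, hsep, hsmall, hlast⟩ := (pathFree_redGraph hc).exists_separated_family s _ hcard
  refine ⟨A, fun i j hij => (hsep hij).1, hsmall, hlast, fun i j hij u hu v hv hadj => ?_⟩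
  simpa [redGraph, hadj] using (hsep hij).2 u hu v hv

theorem stmt_2 {V : Type*} [Fintype V] (G : SimpleGraph V) (r n t : ℕ)
    (hr : 2 ≤ r) (hn : 0 < n) (ht : 0 < t)
    (hV : Fintype.card V = r * n + (r + 1) * t)
    (c : Sym2 V → Bool) (hc : ¬ RedPathLen G c n) :
    ∀ s : ℕ, 1 ≤ s → s ≤ r →
      ∃ A : Fin (s + 1) → Finset V,
        (∀ i j, i ≠ j → Disjoint (A i) (A j)) ∧
        (∀ i : Fin (s + 1), (i : ℕ) < s → (A i).card = t) ∧
        (A (Fin.last s)).card = (r - s) * n + (r - s + 1) * t ∧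
        (∀ i j, i ≠ j → ∀ u ∈ A i, ∀ v ∈ A j, G.Adj u v → c s(u, v) = false) :=
  stmt_2_general G r n t hV c hc
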